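/- arXiv:2511.09542 — 2 statements merged into one kernel-verified Lean document; each statement's English description precedes it below -/
import Mathlib

section
/- Let M ∈ ℝ^{P1×P2} have rank R with compact SVD M = UΣV^T and smallest nonzero singular value λ_min > 0. If M̂ satisfies ∥M̂ − M∥_F ≤ λ_min/8, then the best rank-R approximation SVD_R(M̂) of M̂ in Frobenius norm satisfies SVD_R(M̂) − M = Z − U_⊥ U_⊥^T Z V_⊥ V_⊥^T + Rem, where Z = M̂ − M, U_⊥ (resp. V_⊥) is an orthonormal basis of the orthogonal complement of the column span of U (resp. V), and ∥Rem∥_F ≤ 40 ∥M̂ − M∥_F² / λ_min. -/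
/-!
Let `Z = M̂ - M`, `P = U Uᵀ`, `Q = V Vᵀ`, and let `Pb = W Wᵀ`, `Qb = X Xᵀ` be the orthogonal
projections onto the column and row spaces of `B`. Projecting `M̂` onto the column space of `B`
keeps the rank at most `R`, so by Pythagoras optimality forces `B = Pb M̂`, and likewise
`B = M̂ Qb`; comparing with `M` gives `‖M̂ - B‖ ≤ ‖Z‖`. Hence
`λ ‖(1 - Pb) U‖ ≤ ‖(1 - Pb) M‖ ≤ ‖M̂ - B‖ + ‖Z‖ ≤ 2 ‖Z‖`, and the same for `V` and `Qb`.
As `2 ‖Z‖ / λ ≤ 1/4 < 1`, the column space of `B` has dimension exactly `R`, and then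
`‖(1 - P) W‖ = ‖(1 - Pb) U‖`. Finally, with `Y = Z (1 - Q)`,
`B - M - (Z - (1 - P) Z (1 - Q)) = Pb (1 - P) Y - (1 - Pb) P Y - (M̂ - B) (1 - Qb) Q`,
and each of the three terms has norm at most `2 ‖Z‖² / λ`.
-/

open Matrix

noncomputable def frobNorm {m n : ℕ} (A : Matrix (Fin m) (Fin n) ℝ) : ℝ :=
  Real.sqrt (∑ i, ∑ j, (A i j) ^ 2)

attribute [local instance] Matrix.frobeniusNormedAddCommGroup

namespace Matrix

variable {l m n ι κ κ' : Type*} [Fintype l] [Fintype m] [Fintype n] [Fintype ι] [Fintype κ]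
  [Fintype κ']

theorem frobenius_norm_sq_eq_sum (A : Matrix m n ℝ) : ‖A‖ ^ 2 = ∑ i, ∑ j, A i j ^ 2 := by
  rw [frobenius_norm_def, ← Real.rpow_natCast, ← Real.rpow_mul (by positivity)]
  norm_num [Real.norm_eq_abs, sq_abs]

theorem frobenius_norm_sq_eq_trace (A : Matrix m n ℝ) : ‖A‖ ^ 2 = trace (Aᵀ * A) := by
  rw [frobenius_norm_sq_eq_sum, Finset.sum_comm]
  simp [trace, mul_apply, sq]

theorem frobenius_norm_transpose_sub (A B : Matrix m n ℝ) : ‖Aᵀ - Bᵀ‖ = ‖A - B‖ := by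
  rw [← transpose_sub, frobenius_norm_transpose]

theorem mul_frobenius_norm_le_mul_diagonal [DecidableEq n] {c : ℝ} {d : n → ℝ} (hc : 0 ≤ c)
    (hd : ∀ j, c ≤ d j) (A : Matrix m n ℝ) : c * ‖A‖ ≤ ‖A * diagonal d‖ := by
  rw [← pow_le_pow_iff_left₀ (by positivity) (norm_nonneg _) two_ne_zero, mul_pow,
    frobenius_norm_sq_eq_sum, frobenius_norm_sq_eq_sum, Finset.mul_sum]
  refine Finset.sum_le_sum fun i _ => ?_
  rw [Finset.mul_sum]
  refine Finset.sum_le_sum fun j _ => ?_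
  rw [mul_diagonal, mul_pow, mul_comm]
  gcongr
  exact hd j

section Isometry

variable [DecidableEq κ] {X : Matrix m κ ℝ}

theorem frobenius_norm_mul_of_transpose_mul_self (hX : Xᵀ * X = 1) (A : Matrix κ n ℝ) :
    ‖X * A‖ = ‖A‖ := by
  rw [← sq_eq_sq₀ (norm_nonneg _) (norm_nonneg _), frobenius_norm_sq_eq_trace,
    frobenius_norm_sq_eq_trace, transpose_mul, Matrix.mul_assoc, ← Matrix.mul_assoc Xᵀ, hX,
    Matrix.one_mul]

theorem frobenius_norm_mul_transpose_of_transpose_mul_self (hX : Xᵀ * X = 1)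
    (A : Matrix l κ ℝ) : ‖A * Xᵀ‖ = ‖A‖ := by
  rw [← frobenius_norm_transpose, transpose_mul, transpose_transpose,
    frobenius_norm_mul_of_transpose_mul_self hX, frobenius_norm_transpose]

theorem frobenius_norm_mul_mul_transpose_of_transpose_mul_self (hX : Xᵀ * X = 1)
    (A : Matrix l m ℝ) : ‖A * (X * Xᵀ)‖ = ‖A * X‖ := by
  rw [← Matrix.mul_assoc, frobenius_norm_mul_transpose_of_transpose_mul_self hX]

theorem isStarProjection_mul_transpose_self (hX : Xᵀ * X = 1) : IsStarProjection (X * Xᵀ) where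
  isIdempotentElem := by
    rw [IsIdempotentElem, Matrix.mul_assoc, ← Matrix.mul_assoc Xᵀ, hX, Matrix.one_mul]
  isSelfAdjoint := by simp [IsSelfAdjoint, star_eq_conjTranspose]

theorem card_le_of_transpose_mul_self (hX : Xᵀ * X = 1) : Fintype.card κ ≤ Fintype.card m := by
  calc Fintype.card κ = (Xᵀ * X).rank := by rw [hX, rank_one]
    _ ≤ X.rank := rank_mul_le_right _ _
    _ ≤ Fintype.card m := X.rank_le_card_height

end Isometry

theorem mul_transpose_add_mul_transpose_eq_one {R : Type*} [CommRing R] [DecidableEq m]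
    [DecidableEq κ] [DecidableEq κ'] {U : Matrix m κ R} {U' : Matrix m κ' R}
    (hU : Uᵀ * U = 1) (hU' : U'ᵀ * U' = 1) (hUU' : Uᵀ * U' = 0)
    (hcard : Fintype.card m = Fintype.card κ + Fintype.card κ') :
    U * Uᵀ + U' * U'ᵀ = 1 := by
  have hU'U : U'ᵀ * U = 0 := by rw [← transpose_transpose U, ← transpose_mul, hUU', transpose_zero]
  have e : m ≃ κ ⊕ κ' := Fintype.equivOfCardEq (by simpa using hcard)
  have h : fromRows Uᵀ U'ᵀ * fromCols U U' = 1 := by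
    rw [fromRows_mul_fromCols, hU, hU', hUU', hU'U, fromBlocks_one]
  simpa [fromCols_mul_fromRows] using (fromCols_mul_fromRows_eq_one_comm e U U' Uᵀ U'ᵀ).mpr h

theorem mul_transpose_eq_one_sub {p r : ℕ} {U : Matrix (Fin p) (Fin r) ℝ}
    {U' : Matrix (Fin p) (Fin (p - r)) ℝ} (hU : Uᵀ * U = 1) (hU' : U'ᵀ * U' = 1)
    (hUU' : Uᵀ * U' = 0) : U' * U'ᵀ = 1 - U * Uᵀ := by
  have hr := card_le_of_transpose_mul_self hU
  simp only [Fintype.card_fin] at hr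
  exact eq_sub_of_add_eq' <| mul_transpose_add_mul_transpose_eq_one hU hU' hUU' (by simp; omega)

theorem transpose_eq_self_of_isStarProjection {P : Matrix m m ℝ} (hP : IsStarProjection P) :
    Pᵀ = P := by
  simpa [star_eq_conjTranspose] using hP.isSelfAdjoint.star_eq

theorem frobenius_norm_isStarProjection_mul_sq {P : Matrix m m ℝ} (hP : IsStarProjection P)
    (A : Matrix m n ℝ) : ‖P * A‖ ^ 2 = trace (Aᵀ * (P * A)) := by
  rw [frobenius_norm_sq_eq_trace, transpose_mul, transpose_eq_self_of_isStarProjection hP,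
    Matrix.mul_assoc, ← Matrix.mul_assoc P, hP.isIdempotentElem.eq]

section StarProjection

variable [DecidableEq m] {P : Matrix m m ℝ}

theorem frobenius_norm_sq_eq_add_of_isStarProjection (hP : IsStarProjection P)
    (A : Matrix m n ℝ) : ‖A‖ ^ 2 = ‖P * A‖ ^ 2 + ‖(1 - P) * A‖ ^ 2 := by
  rw [frobenius_norm_isStarProjection_mul_sq hP, frobenius_norm_isStarProjection_mul_sq hP.one_sub,
    frobenius_norm_sq_eq_trace, Matrix.sub_mul, Matrix.one_mul, Matrix.mul_sub, trace_sub]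
  ring

theorem frobenius_norm_isStarProjection_mul_le (hP : IsStarProjection P) (A : Matrix m n ℝ) :
    ‖P * A‖ ≤ ‖A‖ :=
  le_of_pow_le_pow_left₀ two_ne_zero (norm_nonneg _) <| by
    rw [frobenius_norm_sq_eq_add_of_isStarProjection hP A]
    exact le_add_of_nonneg_right (sq_nonneg _)

theorem frobenius_norm_mul_isStarProjection_le (hP : IsStarProjection P) (A : Matrix n m ℝ) :
    ‖A * P‖ ≤ ‖A‖ := by
  rw [← frobenius_norm_transpose, transpose_mul, transpose_eq_self_of_isStarProjection hP,
    ← frobenius_norm_transpose A]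
  exact frobenius_norm_isStarProjection_mul_le hP _

theorem isStarProjection_mul_eq_of_frobenius_norm_sub_le (hP : IsStarProjection P)
    {A B : Matrix m n ℝ} (hPB : P * B = B) (h : ‖A - B‖ ≤ ‖A - P * A‖) : P * A = B := by
  have hPAB : (1 - P) * (A - B) = A - P * A := by
    rw [Matrix.sub_mul, Matrix.one_mul, Matrix.mul_sub, hPB]
    abel
  have hpyth := frobenius_norm_sq_eq_add_of_isStarProjection hP (A - B)
  rw [hPAB, Matrix.mul_sub, hPB] at hpyth
  have h0 : ‖P * A - B‖ ^ 2 ≤ 0 := by nlinarith [pow_le_pow_left₀ (norm_nonneg _) h 2]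
  exact sub_eq_zero.mp (norm_eq_zero.mp (pow_eq_zero_iff two_ne_zero |>.mp
    (le_antisymm h0 (sq_nonneg _))))

end StarProjection

section Subspaces

variable [DecidableEq m] [DecidableEq ι] [DecidableEq κ] {W : Matrix m ι ℝ} {U : Matrix m κ ℝ}

theorem frobenius_norm_one_sub_mul_sq (hW : Wᵀ * W = 1) (hU : Uᵀ * U = 1) :
    ‖(1 - W * Wᵀ) * U‖ ^ 2 = Fintype.card κ - ‖Wᵀ * U‖ ^ 2 := by
  have h := frobenius_norm_sq_eq_add_of_isStarProjection (isStarProjection_mul_transpose_self hW) U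
  rw [Matrix.mul_assoc, frobenius_norm_mul_of_transpose_mul_self hW, frobenius_norm_sq_eq_trace,
    hU, trace_one] at h
  linarith

/-- A distance below one between the spans forces them to have the same dimension, and then the
two identities `frobenius_norm_one_sub_mul_sq` have the same right-hand side. -/
theorem frobenius_norm_one_sub_mul_comm (hW : Wᵀ * W = 1) (hU : Uᵀ * U = 1)
    (hcard : Fintype.card ι ≤ Fintype.card κ) (h : ‖(1 - W * Wᵀ) * U‖ < 1) :
    ‖(1 - U * Uᵀ) * W‖ = ‖(1 - W * Wᵀ) * U‖ := by
  have hWU := frobenius_norm_one_sub_mul_sq hW hU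
  have hUW := frobenius_norm_one_sub_mul_sq hU hW
  have hT : ‖Uᵀ * W‖ = ‖Wᵀ * U‖ := by
    rw [← frobenius_norm_transpose, transpose_mul, transpose_transpose]
  have hlt : (Fintype.card κ : ℝ) < Fintype.card ι + 1 := by
    rw [hT] at hUW
    linarith [pow_lt_one₀ (norm_nonneg _) h two_ne_zero, sq_nonneg ‖(1 - U * Uᵀ) * W‖]
  have hcard' : Fintype.card ι = Fintype.card κ := by
    have : Fintype.card κ < Fintype.card ι + 1 := by exact_mod_cast hlt
    omega
  rw [← sq_eq_sq₀ (norm_nonneg _) (norm_nonneg _), hWU, hUW, hT, hcard']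

end Subspaces

theorem mul_frobenius_norm_one_sub_mul_le [DecidableEq m] [DecidableEq κ] {U : Matrix m κ ℝ}
    {V : Matrix n κ ℝ} {σ : κ → ℝ} {lam : ℝ} {P : Matrix m m ℝ} {M A B : Matrix m n ℝ}
    (hV : Vᵀ * V = 1) (hlam : 0 ≤ lam) (hσ : ∀ i, lam ≤ σ i) (hP : IsStarProjection P)
    (hM : M = U * diagonal σ * Vᵀ) (hPA : P * A = B) :
    lam * ‖(1 - P) * U‖ ≤ ‖A - B‖ + ‖A - M‖ := by
  calc lam * ‖(1 - P) * U‖ ≤ ‖(1 - P) * U * diagonal σ‖ :=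
        mul_frobenius_norm_le_mul_diagonal hlam hσ _
    _ = ‖(1 - P) * M‖ := by
        rw [← frobenius_norm_mul_transpose_of_transpose_mul_self hV, hM]
        simp only [Matrix.mul_assoc]
    _ = ‖(A - B) - (1 - P) * (A - M)‖ := by
        rw [Matrix.mul_sub (1 - P) A M, Matrix.sub_mul 1 P A, Matrix.one_mul, hPA]
        congr 1
        abel
    _ ≤ ‖A - B‖ + ‖(1 - P) * (A - M)‖ := norm_sub_le _ _
    _ ≤ ‖A - B‖ + ‖A - M‖ := by
        gcongr
        exact frobenius_norm_isStarProjection_mul_le hP.one_sub _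

/-- `W` consists of the eigenvectors of `B Bᵀ` with nonzero eigenvalue; the other eigenvectors
`s` satisfy `‖Bᵀ s‖² = 0`. -/
theorem exists_isometry_mul_transpose_mul_eq [DecidableEq m] (B : Matrix m n ℝ) :
    ∃ (r : ℕ) (W : Matrix m (Fin r) ℝ), Wᵀ * W = 1 ∧ W * Wᵀ * B = B ∧ r ≤ B.rank := by
  classical
  have hG : (B * Bᵀ).IsHermitian := by
    simpa using isHermitian_mul_conjTranspose_self B
  set S : Matrix m m ℝ := (hG.eigenvectorUnitary : Matrix m m ℝ)
  set μ := hG.eigenvalues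
  have hSS : Sᵀ * S = 1 := by
    simpa [S, star_eq_conjTranspose] using (hG.eigenvectorUnitary).2.1
  have hSS' : S * Sᵀ = 1 := by
    simpa [S, star_eq_conjTranspose] using (hG.eigenvectorUnitary).2.2
  have hdiag : (Sᵀ * B) * (Sᵀ * B)ᵀ = diagonal μ := by
    have := hG.conjStarAlgAut_star_eigenvectorUnitary
    rw [Unitary.conjStarAlgAut_star_apply] at this
    simpa [S, μ, star_eq_conjTranspose, Matrix.mul_assoc] using this
  have hrow : ∀ j k, μ j = 0 → (Sᵀ * B) j k = 0 := by
    intro j k hj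
    have h := congrFun (congrFun hdiag j) j
    rw [mul_apply, diagonal_apply_eq, hj] at h
    simp only [transpose_apply] at h
    exact mul_self_eq_zero.mp <|
      (Finset.sum_eq_zero_iff_of_nonneg fun _ _ => mul_self_nonneg _).mp h k (Finset.mem_univ _)
  let f : Fin (Fintype.card {j // μ j ≠ 0}) ↪ m :=
    (Fintype.equivFin _).symm.toEmbedding.trans (Function.Embedding.subtype _)
  refine ⟨_, S.submatrix id f, ?_, ?_, ?_⟩
  · rw [transpose_submatrix, ← submatrix_mul _ _ _ _ _ Function.bijective_id, hSS,
      submatrix_one_embedding]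
  · have hWB : (S.submatrix id f)ᵀ * B = (Sᵀ * B).submatrix f id := by
      rw [transpose_submatrix, submatrix_mul _ _ _ _ _ Function.bijective_id, submatrix_id_id]
    conv_rhs => rw [← Matrix.one_mul B, ← hSS', Matrix.mul_assoc]
    rw [Matrix.mul_assoc, hWB]
    ext p q
    simp only [mul_apply, submatrix_apply, id]
    refine Fintype.sum_of_injective f f.injective _ _ (fun j hj => ?_) (fun _ => rfl)
    have hμ : μ j = 0 := by
      by_contra hμ
      exact hj ⟨Fintype.equivFin _ ⟨j, hμ⟩, by simp [f]⟩
    rw [← mul_apply, hrow j q hμ, mul_zero]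
  · rw [← rank_self_mul_transpose, hG.rank_eq_card_non_zero_eigs]

theorem frobenius_norm_remainder_le [DecidableEq m] [DecidableEq n] {M A B : Matrix m n ℝ}
    {P Pb : Matrix m m ℝ} {Q Qb : Matrix n n ℝ} (hP : Pᵀ = P) (hPb : Pbᵀ = Pb)
    (hQ : IsStarProjection Q) (hQb : IsIdempotentElem Qb) (hMQ : M * (1 - Q) = 0)
    (hPbA : Pb * A = B) (hAQb : A * Qb = B) :
    ‖B - M - ((A - M) - (1 - P) * (A - M) * (1 - Q))‖ ≤
      (‖(1 - P) * Pb‖ + ‖(1 - Pb) * P‖) * ‖A - M‖ + ‖A - B‖ * ‖(1 - Qb) * Q‖ := by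
  set Y := A * (1 - Q)
  have hY : (A - M) * (1 - Q) = Y := by rw [Matrix.sub_mul, hMQ, sub_zero]
  have hYle : ‖Y‖ ≤ ‖A - M‖ := hY ▸ frobenius_norm_mul_isStarProjection_le hQ.one_sub _
  have hABQb : (A - B) * (1 - Qb) = A - B := by
    rw [Matrix.mul_sub, Matrix.mul_one, Matrix.sub_mul, hAQb, ← hAQb, Matrix.mul_assoc, hQb.eq,
      sub_self, sub_zero]
  have hdecomp : B - M - ((A - M) - (1 - P) * (A - M) * (1 - Q)) =
      Pb * (1 - P) * Y - (1 - Pb) * P * Y - (A - B) * (1 - Qb) * Q := by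
    rw [Matrix.mul_assoc (1 - P), hY, hABQb, ← hPbA]
    simp only [Y, Matrix.mul_sub, Matrix.sub_mul, Matrix.mul_one, Matrix.one_mul,
      Matrix.mul_assoc]
    abel
  have hPbP : ‖Pb * (1 - P)‖ = ‖(1 - P) * Pb‖ := by
    rw [← frobenius_norm_transpose, transpose_mul, transpose_sub, transpose_one, hP, hPb]
  rw [hdecomp]
  calc _ ≤ ‖Pb * (1 - P) * Y‖ + ‖(1 - Pb) * P * Y‖ + ‖(A - B) * (1 - Qb) * Q‖ :=
        norm_sub_le_of_le (norm_sub_le _ _) le_rfl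
    _ ≤ ‖Pb * (1 - P)‖ * ‖Y‖ + ‖(1 - Pb) * P‖ * ‖Y‖ + ‖A - B‖ * ‖(1 - Qb) * Q‖ := by
        rw [Matrix.mul_assoc (A - B)]
        gcongr <;> exact frobenius_norm_mul _ _
    _ ≤ _ := by
        rw [hPbP, add_mul]
        gcongr

def IsBestRankApprox (R : ℕ) (A B : Matrix m n ℝ) : Prop :=
  B.rank ≤ R ∧ ∀ C : Matrix m n ℝ, C.rank ≤ R → ‖A - B‖ ≤ ‖A - C‖

theorem IsBestRankApprox.transpose {R : ℕ} {A B : Matrix m n ℝ}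
    (h : IsBestRankApprox R A B) : IsBestRankApprox R Aᵀ Bᵀ :=
  ⟨by rw [rank_transpose]; exact h.1, fun C hC => by
    rw [frobenius_norm_transpose_sub, ← transpose_transpose C, frobenius_norm_transpose_sub]
    exact h.2 Cᵀ (by rwa [rank_transpose])⟩

theorem IsBestRankApprox.exists_mul_transpose_mul_eq [DecidableEq m] {R : ℕ}
    {A B : Matrix m n ℝ} (h : IsBestRankApprox R A B) :
    ∃ (r : ℕ) (W : Matrix m (Fin r) ℝ), Wᵀ * W = 1 ∧ W * Wᵀ * A = B ∧ r ≤ R := by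
  obtain ⟨r, W, hW, hWB, hr⟩ := exists_isometry_mul_transpose_mul_eq B
  have hrank : (W * Wᵀ * A).rank ≤ R :=
    calc (W * Wᵀ * A).rank ≤ W.rank := (rank_mul_le_left _ _).trans (rank_mul_le_left _ _)
      _ ≤ r := by simpa using W.rank_le_card_width
      _ ≤ R := hr.trans h.1
  exact ⟨r, W, hW, isStarProjection_mul_eq_of_frobenius_norm_sub_le
    (isStarProjection_mul_transpose_self hW) hWB (h.2 _ hrank), hr.trans h.1⟩

end Matrix

theorem frobNorm_eq_norm {m n : ℕ} (A : Matrix (Fin m) (Fin n) ℝ) : frobNorm A = ‖A‖ := by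
  rw [frobNorm, ← frobenius_norm_sq_eq_sum, Real.sqrt_sq (norm_nonneg _)]

theorem stmt4_general {P1 P2 R : ℕ} (M Mhat : Matrix (Fin P1) (Fin P2) ℝ)
    (U : Matrix (Fin P1) (Fin R) ℝ) (V : Matrix (Fin P2) (Fin R) ℝ)
    (σ : Fin R → ℝ) (lam : ℝ)
    (Uperp : Matrix (Fin P1) (Fin (P1 - R)) ℝ)
    (Vperp : Matrix (Fin P2) (Fin (P2 - R)) ℝ)
    (hU : Uᵀ * U = 1) (hV : Vᵀ * V = 1)
    (hUperp : Uperpᵀ * Uperp = 1) (hVperp : Vperpᵀ * Vperp = 1)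
    (hUorth : Uᵀ * Uperp = 0) (hVorth : Vᵀ * Vperp = 0)
    (hSVD : M = U * Matrix.diagonal σ * Vᵀ)
    (hlam : 0 < lam) (hσ : ∀ i, lam ≤ σ i)
    (hclose : frobNorm (Mhat - M) ≤ lam / 8)
    (B : Matrix (Fin P1) (Fin P2) ℝ)
    (hBrank : B.rank ≤ R)
    (hBbest : ∀ C : Matrix (Fin P1) (Fin P2) ℝ, C.rank ≤ R →
      frobNorm (Mhat - B) ≤ frobNorm (Mhat - C)) :
    ∃ Rem : Matrix (Fin P1) (Fin P2) ℝ,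
      B - M = (Mhat - M) - Uperp * Uperpᵀ * (Mhat - M) * (Vperp * Vperpᵀ) + Rem ∧
      frobNorm Rem ≤ 40 * frobNorm (Mhat - M) ^ 2 / lam := by
  simp only [frobNorm_eq_norm] at hclose hBbest ⊢
  have hMV : M * (1 - V * Vᵀ) = 0 := by
    rw [hSVD, Matrix.mul_sub, Matrix.mul_one, Matrix.mul_assoc _ Vᵀ, ← Matrix.mul_assoc Vᵀ, hV,
      Matrix.one_mul, sub_self]
  have hE : ‖Mhat - B‖ ≤ ‖Mhat - M‖ :=
    hBbest M (hSVD ▸ (rank_mul_le_right _ _).trans (by simpa using Vᵀ.rank_le_card_height))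
  have hbest : IsBestRankApprox R Mhat B := ⟨hBrank, hBbest⟩
  obtain ⟨r, W, hW, hWM, hr⟩ := hbest.exists_mul_transpose_mul_eq
  obtain ⟨s, X, hX, hXM, -⟩ := hbest.transpose.exists_mul_transpose_mul_eq
  have hWU : lam * ‖(1 - W * Wᵀ) * U‖ ≤ 2 * ‖Mhat - M‖ := by
    linarith [mul_frobenius_norm_one_sub_mul_le hV hlam.le hσ
      (isStarProjection_mul_transpose_self hW) hSVD hWM]
  have hXV : lam * ‖(1 - X * Xᵀ) * V‖ ≤ 2 * ‖Mhat - M‖ := by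
    have := mul_frobenius_norm_one_sub_mul_le (U := V) (M := Mᵀ) hU hlam.le hσ
      (isStarProjection_mul_transpose_self hX) (by rw [hSVD]; simp [Matrix.mul_assoc]) hXM
    rw [frobenius_norm_transpose_sub, frobenius_norm_transpose_sub] at this
    linarith
  -- `hclose` gives `‖(1 - W Wᵀ) U‖ ≤ 1/4`, so the column space of `B` has dimension `R`.
  have hUW : ‖(1 - U * Uᵀ) * W‖ = ‖(1 - W * Wᵀ) * U‖ :=
    frobenius_norm_one_sub_mul_comm hW hU (by simpa using hr) (by nlinarith)
  have hRem := frobenius_norm_remainder_le (P := U * Uᵀ) (by simp) (by simp)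
    (isStarProjection_mul_transpose_self hV) (isStarProjection_mul_transpose_self hX).1 hMV hWM
    (by simpa [Matrix.mul_assoc] using congrArg transpose hXM)
  simp only [frobenius_norm_mul_mul_transpose_of_transpose_mul_self hW,
    frobenius_norm_mul_mul_transpose_of_transpose_mul_self hU,
    frobenius_norm_mul_mul_transpose_of_transpose_mul_self hV, hUW] at hRem
  refine ⟨_, (add_sub_cancel _ (B - M)).symm, ?_⟩
  rw [mul_transpose_eq_one_sub hU hUperp hUorth, mul_transpose_eq_one_sub hV hVperp hVorth,
    le_div_iff₀ hlam]
  nlinarith [norm_nonneg (Mhat - M), norm_nonneg ((1 - W * Wᵀ) * U),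
    norm_nonneg ((1 - X * Xᵀ) * V), norm_nonneg (Mhat - B)]

/-- perturbation bound for the best rank-`R` approximation.
Let `M = U Σ Vᵀ` be a compact SVD of a rank-`R` matrix with smallest nonzero
singular value at least `λmin > 0`, and let `U⊥, V⊥` be orthonormal bases of
the orthogonal complements of the column spans of `U, V`.  If
`‖M̂ - M‖_F ≤ λmin/8`, then any best rank-`R` approximation `B` of `M̂` in
Frobenius norm satisfies `B - M = Z - U⊥U⊥ᵀ Z V⊥V⊥ᵀ + Rem` with
`‖Rem‖_F ≤ 40 ‖M̂ - M‖_F² / λmin`, where `Z = M̂ - M`. -/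
theorem stmt4 {P1 P2 R : ℕ} (M Mhat : Matrix (Fin P1) (Fin P2) ℝ)
    (U : Matrix (Fin P1) (Fin R) ℝ) (V : Matrix (Fin P2) (Fin R) ℝ)
    (σ : Fin R → ℝ) (lam : ℝ)
    (Uperp : Matrix (Fin P1) (Fin (P1 - R)) ℝ)
    (Vperp : Matrix (Fin P2) (Fin (P2 - R)) ℝ)
    (hU : Uᵀ * U = 1) (hV : Vᵀ * V = 1)
    (hUperp : Uperpᵀ * Uperp = 1) (hVperp : Vperpᵀ * Vperp = 1)
    (hUorth : Uᵀ * Uperp = 0) (hVorth : Vᵀ * Vperp = 0)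
    (hSVD : M = U * Matrix.diagonal σ * Vᵀ)
    (hrank : M.rank = R)
    (hlam : 0 < lam) (hσ : ∀ i, lam ≤ σ i)
    (hclose : frobNorm (Mhat - M) ≤ lam / 8)
    (B : Matrix (Fin P1) (Fin P2) ℝ)
    (hBrank : B.rank ≤ R)
    (hBbest : ∀ C : Matrix (Fin P1) (Fin P2) ℝ, C.rank ≤ R →
      frobNorm (Mhat - B) ≤ frobNorm (Mhat - C)) :
    ∃ Rem : Matrix (Fin P1) (Fin P2) ℝ,
      B - M = (Mhat - M) - Uperp * Uperpᵀ * (Mhat - M) * (Vperp * Vperpᵀ) + Rem ∧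
      frobNorm Rem ≤ 40 * frobNorm (Mhat - M) ^ 2 / lam :=
  stmt4_general M Mhat U V σ lam Uperp Vperp hU hV hUperp hVperp hUorth hVorth hSVD hlam hσ hclose B
    hBrank hBbest
end

section
/- Let Y₀ be a design matrix with full column rank, H₀ its hat matrix, S another design matrix, and S̃ = (I − H₀)S of full column rank. For a response z = Y₀b₁ + Sb₂ + ν, the difference of residual sums of squares between the small model (design Y₀) and the large model (design [Y₀ S]) satisfies: RSS_small − RSS_large = ∥S̃(S̃^TS̃)^{-1}S̃^T(S̃b₂ + (I−H₀)ν)∥², and moreover RSS_small − RSS_large ≥ λ_min(S̃^TS̃)·∥b₂∥² + 2 b₂^T S̃^T (I−H₀)ν. -/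
open Matrix

/-!
`H₀` and `P = S̃(S̃ᵀS̃)⁻¹S̃ᵀ` are symmetric idempotents, so least squares against a design `A`
leaves exactly the residual `(I - H_A)z`. Minimising the large model over `γ₁` first reduces
it to regressing `e = (I - H₀)z` on `S̃` (Frisch–Waugh–Lovell), hence `RSS_small = ‖e‖²`,
`RSS_large = ‖(I - P)e‖²`, and Pythagoras gives the difference `‖Pe‖²`. Since
`e = S̃b₂ + (I - H₀)ν` and `P` fixes `S̃b₂`, expanding `‖S̃b₂ + P(I - H₀)ν‖²` and dropping the
last square gives the lower bound.
-/

section Projection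

variable {m : Type*} [Fintype m]

lemma dotProduct_self_add (u w : m → ℝ) :
    (u + w) ⬝ᵥ (u + w) = u ⬝ᵥ u + 2 * (u ⬝ᵥ w) + w ⬝ᵥ w := by
  simp only [add_dotProduct, dotProduct_add, dotProduct_comm w u]
  ring

variable {P : Matrix m m ℝ}

lemma Matrix.IsSymm.mulVec_dotProduct (hP : P.IsSymm) (v w : m → ℝ) :
    (P *ᵥ v) ⬝ᵥ w = v ⬝ᵥ (P *ᵥ w) := by
  rw [dotProduct_mulVec, ← mulVec_transpose, hP.eq]

lemma dotProduct_self_add_two_mul_le_mulVec_add (hP : P.IsSymm) {a : m → ℝ} (ha : P *ᵥ a = a)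
    (c : m → ℝ) : a ⬝ᵥ a + 2 * (a ⬝ᵥ c) ≤ (P *ᵥ (a + c)) ⬝ᵥ (P *ᵥ (a + c)) := by
  have hac : a ⬝ᵥ (P *ᵥ c) = a ⬝ᵥ c := by rw [← hP.mulVec_dotProduct, ha]
  rw [mulVec_add, ha, dotProduct_self_add, hac]
  have := dotProduct_self_star_nonneg (P *ᵥ c)
  simp only [star_trivial] at this
  linarith

variable [DecidableEq m]

lemma dotProduct_self_eq_mulVec_add_one_sub_mulVec (hP : P.IsSymm) (hP2 : IsIdempotentElem P)
    (v : m → ℝ) :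
    v ⬝ᵥ v = (P *ᵥ v) ⬝ᵥ (P *ᵥ v) + ((1 - P) *ᵥ v) ⬝ᵥ ((1 - P) *ᵥ v) := by
  have hperp : (P *ᵥ v) ⬝ᵥ ((1 - P) *ᵥ v) = 0 := by
    rw [hP.mulVec_dotProduct, mulVec_mulVec, mul_sub, mul_one, hP2.eq, sub_self, zero_mulVec,
      dotProduct_zero]
  conv_lhs => rw [← one_mulVec v, ← add_sub_cancel P 1, add_mulVec]
  rw [dotProduct_self_add, hperp, mul_zero, add_zero]

end Projection

section LeastSquares

variable {m n p : Type*} [Fintype m] [Fintype n] [Fintype p] [DecidableEq n]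

noncomputable def hatMatrix (A : Matrix m n ℝ) : Matrix m m ℝ := A * (Aᵀ * A)⁻¹ * Aᵀ

lemma isSymm_hatMatrix (A : Matrix m n ℝ) : (hatMatrix A).IsSymm := by
  simp only [hatMatrix, IsSymm, transpose_mul, transpose_transpose, transpose_nonsing_inv,
    Matrix.mul_assoc]

lemma hatMatrix_mulVec (A : Matrix m n ℝ) (z : m → ℝ) :
    hatMatrix A *ᵥ z = A *ᵥ ((Aᵀ * A)⁻¹ *ᵥ (Aᵀ *ᵥ z)) := by
  rw [mulVec_mulVec, mulVec_mulVec, hatMatrix]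

variable {A : Matrix m n ℝ}

lemma hatMatrix_mul_self (hA : IsUnit (Aᵀ * A).det) : hatMatrix A * A = A := by
  rw [hatMatrix, Matrix.mul_assoc, Matrix.mul_assoc, nonsing_inv_mul _ hA, Matrix.mul_one]

lemma isIdempotentElem_hatMatrix (hA : IsUnit (Aᵀ * A).det) : IsIdempotentElem (hatMatrix A) := by
  rw [IsIdempotentElem]
  nth_rw 2 [hatMatrix]
  simp only [← Matrix.mul_assoc]
  rw [hatMatrix_mul_self hA, hatMatrix]

variable [DecidableEq m]

lemma one_sub_hatMatrix_mul_self (hA : IsUnit (Aᵀ * A).det) : (1 - hatMatrix A) * A = 0 := by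
  rw [Matrix.sub_mul, Matrix.one_mul, hatMatrix_mul_self hA, sub_self]

lemma one_sub_hatMatrix_mulVec_sub (hA : IsUnit (Aᵀ * A).det) (z : m → ℝ) (γ : n → ℝ) :
    (1 - hatMatrix A) *ᵥ (z - A *ᵥ γ) = (1 - hatMatrix A) *ᵥ z := by
  rw [mulVec_sub, mulVec_mulVec, one_sub_hatMatrix_mul_self hA, zero_mulVec, sub_zero]

lemma one_sub_hatMatrix_mulVec_add (hA : IsUnit (Aᵀ * A).det) (x : n → ℝ) (B : Matrix m p ℝ)
    (y : p → ℝ) (w : m → ℝ) :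
    (1 - hatMatrix A) *ᵥ (A *ᵥ x + B *ᵥ y + w) =
      ((1 - hatMatrix A) * B) *ᵥ y + (1 - hatMatrix A) *ᵥ w := by
  rw [add_assoc, mulVec_add, mulVec_mulVec, one_sub_hatMatrix_mul_self hA, zero_mulVec, zero_add,
    mulVec_add, mulVec_mulVec]

lemma dotProduct_one_sub_hatMatrix_le (hA : IsUnit (Aᵀ * A).det) (v : m → ℝ) :
    ((1 - hatMatrix A) *ᵥ v) ⬝ᵥ ((1 - hatMatrix A) *ᵥ v) ≤ v ⬝ᵥ v := by
  rw [dotProduct_self_eq_mulVec_add_one_sub_mulVec (isSymm_hatMatrix A)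
    (isIdempotentElem_hatMatrix hA) v, le_add_iff_nonneg_left]
  simpa using dotProduct_self_star_nonneg (hatMatrix A *ᵥ v)

lemma isLeast_rss (hA : IsUnit (Aᵀ * A).det) (z : m → ℝ) :
    IsLeast (Set.range fun γ => (z - A *ᵥ γ) ⬝ᵥ (z - A *ᵥ γ))
      (((1 - hatMatrix A) *ᵥ z) ⬝ᵥ ((1 - hatMatrix A) *ᵥ z)) := by
  refine ⟨⟨(Aᵀ * A)⁻¹ *ᵥ (Aᵀ *ᵥ z), ?_⟩, ?_⟩
  · dsimp only
    rw [← hatMatrix_mulVec, sub_mulVec, one_mulVec]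
  · rintro _ ⟨γ, rfl⟩
    rw [← one_sub_hatMatrix_mulVec_sub hA z γ]
    exact dotProduct_one_sub_hatMatrix_le hA _

lemma isLeast_rss_prod (hA : IsUnit (Aᵀ * A).det) (B : Matrix m p ℝ) (z : m → ℝ) {c : ℝ}
    (hc : IsLeast (Set.range fun γ => ((1 - hatMatrix A) *ᵥ z - ((1 - hatMatrix A) * B) *ᵥ γ) ⬝ᵥ
      ((1 - hatMatrix A) *ᵥ z - ((1 - hatMatrix A) * B) *ᵥ γ)) c) :
    IsLeast (Set.range fun γ : (n → ℝ) × (p → ℝ) =>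
      (z - A *ᵥ γ.1 - B *ᵥ γ.2) ⬝ᵥ (z - A *ᵥ γ.1 - B *ᵥ γ.2)) c := by
  have hres : ∀ γ : (n → ℝ) × (p → ℝ),
      (1 - hatMatrix A) *ᵥ (z - A *ᵥ γ.1 - B *ᵥ γ.2) =
        (1 - hatMatrix A) *ᵥ z - ((1 - hatMatrix A) * B) *ᵥ γ.2 := by
    intro γ
    rw [sub_right_comm, ← mulVec_mulVec, ← mulVec_sub, one_sub_hatMatrix_mulVec_sub hA]
  obtain ⟨⟨γ₂, hγ₂⟩, hlow⟩ := hc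
  refine ⟨⟨((Aᵀ * A)⁻¹ *ᵥ (Aᵀ *ᵥ (z - B *ᵥ γ₂)), γ₂), ?_⟩, ?_⟩
  · have hfit : z - A *ᵥ ((Aᵀ * A)⁻¹ *ᵥ (Aᵀ *ᵥ (z - B *ᵥ γ₂))) - B *ᵥ γ₂ =
        (1 - hatMatrix A) *ᵥ z - ((1 - hatMatrix A) * B) *ᵥ γ₂ := by
      rw [sub_right_comm, ← hatMatrix_mulVec, ← mulVec_mulVec, ← mulVec_sub, sub_mulVec,
        one_mulVec]
    dsimp only
    rw [hfit]
    exact hγ₂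
  · rintro _ ⟨γ, rfl⟩
    exact (hlow ⟨γ.2, by dsimp only; rw [← hres]⟩).trans (dotProduct_one_sub_hatMatrix_le hA _)

end LeastSquares

theorem stmt10_general {m d0 d1 : ℕ}
    (Y0 : Matrix (Fin m) (Fin d0) ℝ) (S : Matrix (Fin m) (Fin d1) ℝ)
    (hY0inv : IsUnit (Y0ᵀ * Y0).det)
    (b1 : Fin d0 → ℝ) (b2 : Fin d1 → ℝ) (ν : Fin m → ℝ)
    (z : Fin m → ℝ) (hz : z = Y0 *ᵥ b1 + S *ᵥ b2 + ν) :
    let H0 : Matrix (Fin m) (Fin m) ℝ := Y0 * (Y0ᵀ * Y0)⁻¹ * Y0ᵀ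
    let St : Matrix (Fin m) (Fin d1) ℝ := (1 - H0) * S
    let PSt : Matrix (Fin m) (Fin m) ℝ := St * (Stᵀ * St)⁻¹ * Stᵀ
    let RSSsmall : ℝ := ⨅ γ1 : Fin d0 → ℝ, (z - Y0 *ᵥ γ1) ⬝ᵥ (z - Y0 *ᵥ γ1)
    let RSSlarge : ℝ := ⨅ γ : (Fin d0 → ℝ) × (Fin d1 → ℝ),
        (z - Y0 *ᵥ γ.1 - S *ᵥ γ.2) ⬝ᵥ (z - Y0 *ᵥ γ.1 - S *ᵥ γ.2)
    St.rank = d1 → IsUnit (Stᵀ * St).det →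
    (RSSsmall - RSSlarge =
        (PSt *ᵥ (St *ᵥ b2 + (1 - H0) *ᵥ ν)) ⬝ᵥ (PSt *ᵥ (St *ᵥ b2 + (1 - H0) *ᵥ ν))) ∧
    ∀ lam : ℝ, (∀ x : Fin d1 → ℝ, lam * (x ⬝ᵥ x) ≤ x ⬝ᵥ ((Stᵀ * St) *ᵥ x)) →
      lam * (b2 ⬝ᵥ b2) + 2 * (b2 ⬝ᵥ (Stᵀ *ᵥ ((1 - H0) *ᵥ ν))) ≤ RSSsmall - RSSlarge := by
  intro H0 St PSt RSSsmall RSSlarge _ hStinv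
  set e := (1 - H0) *ᵥ z
  have he : e = St *ᵥ b2 + (1 - H0) *ᵥ ν := by
    subst hz
    exact one_sub_hatMatrix_mulVec_add hY0inv b1 S b2 ν
  have hsmall : RSSsmall = e ⬝ᵥ e := (isLeast_rss hY0inv z).csInf_eq
  have hlarge : RSSlarge = ((1 - PSt) *ᵥ e) ⬝ᵥ ((1 - PSt) *ᵥ e) :=
    (isLeast_rss_prod hY0inv S z (isLeast_rss hStinv e)).csInf_eq
  have hdiff : RSSsmall - RSSlarge = (PSt *ᵥ e) ⬝ᵥ (PSt *ᵥ e) := by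
    have := dotProduct_self_eq_mulVec_add_one_sub_mulVec (P := PSt) (isSymm_hatMatrix St)
      (isIdempotentElem_hatMatrix hStinv) e
    rw [hsmall, hlarge]
    linarith
  refine ⟨by rw [hdiff, he], fun lam hlam => ?_⟩
  have hPSt : PSt *ᵥ (St *ᵥ b2) = St *ᵥ b2 := by
    rw [mulVec_mulVec]
    exact congrArg (· *ᵥ b2) (hatMatrix_mul_self hStinv)
  have hquad : b2 ⬝ᵥ ((Stᵀ * St) *ᵥ b2) = (St *ᵥ b2) ⬝ᵥ (St *ᵥ b2) := by
    rw [← mulVec_mulVec, dotProduct_transpose_mulVec]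
  have hcross : b2 ⬝ᵥ (Stᵀ *ᵥ ((1 - H0) *ᵥ ν)) = (St *ᵥ b2) ⬝ᵥ ((1 - H0) *ᵥ ν) := by
    rw [dotProduct_transpose_mulVec, dotProduct_comm]
  calc lam * (b2 ⬝ᵥ b2) + 2 * (b2 ⬝ᵥ (Stᵀ *ᵥ ((1 - H0) *ᵥ ν)))
      ≤ (St *ᵥ b2) ⬝ᵥ (St *ᵥ b2) + 2 * ((St *ᵥ b2) ⬝ᵥ ((1 - H0) *ᵥ ν)) := by
        linarith [hlam b2]
    _ ≤ (PSt *ᵥ e) ⬝ᵥ (PSt *ᵥ e) :=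
        he ▸ dotProduct_self_add_two_mul_le_mulVec_add (isSymm_hatMatrix St) hPSt _
    _ = RSSsmall - RSSlarge := hdiff.symm

/-- RSS difference between nested models.  For the response
`z = Y₀b₁ + Sb₂ + ν` with `H₀` the hat matrix of `Y₀` and `S̃ = (I - H₀)S`
of full column rank,
`RSS_small - RSS_large = ‖S̃(S̃ᵀS̃)⁻¹S̃ᵀ(S̃b₂ + (I-H₀)ν)‖²` and
`RSS_small - RSS_large ≥ λ_min(S̃ᵀS̃)·‖b₂‖² + 2 b₂ᵀS̃ᵀ(I-H₀)ν`, where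
`λ_min(S̃ᵀS̃)` is characterized as a uniform quadratic-form lower bound. -/
theorem stmt10 {m d0 d1 : ℕ}
    (Y0 : Matrix (Fin m) (Fin d0) ℝ) (S : Matrix (Fin m) (Fin d1) ℝ)
    (hY0 : Y0.rank = d0) (hY0inv : IsUnit (Y0ᵀ * Y0).det)
    (b1 : Fin d0 → ℝ) (b2 : Fin d1 → ℝ) (ν : Fin m → ℝ)
    (z : Fin m → ℝ) (hz : z = Y0 *ᵥ b1 + S *ᵥ b2 + ν) :
    let H0 : Matrix (Fin m) (Fin m) ℝ := Y0 * (Y0ᵀ * Y0)⁻¹ * Y0ᵀ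
    let St : Matrix (Fin m) (Fin d1) ℝ := (1 - H0) * S
    let PSt : Matrix (Fin m) (Fin m) ℝ := St * (Stᵀ * St)⁻¹ * Stᵀ
    let RSSsmall : ℝ := ⨅ γ1 : Fin d0 → ℝ, (z - Y0 *ᵥ γ1) ⬝ᵥ (z - Y0 *ᵥ γ1)
    let RSSlarge : ℝ := ⨅ γ : (Fin d0 → ℝ) × (Fin d1 → ℝ),
        (z - Y0 *ᵥ γ.1 - S *ᵥ γ.2) ⬝ᵥ (z - Y0 *ᵥ γ.1 - S *ᵥ γ.2)
    St.rank = d1 → IsUnit (Stᵀ * St).det →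
    (RSSsmall - RSSlarge =
        (PSt *ᵥ (St *ᵥ b2 + (1 - H0) *ᵥ ν)) ⬝ᵥ (PSt *ᵥ (St *ᵥ b2 + (1 - H0) *ᵥ ν))) ∧
    ∀ lam : ℝ, (∀ x : Fin d1 → ℝ, lam * (x ⬝ᵥ x) ≤ x ⬝ᵥ ((Stᵀ * St) *ᵥ x)) →
      lam * (b2 ⬝ᵥ b2) + 2 * (b2 ⬝ᵥ (Stᵀ *ᵥ ((1 - H0) *ᵥ ν))) ≤ RSSsmall - RSSlarge :=
  stmt10_general Y0 S hY0inv b1 b2 ν z hz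
end
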